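/- arXiv:2105.12382 — 8 statements merged into one kernel-verified Lean document; each statement's English description precedes it below -/
import Mathlib

section
/- (Proposition 1, characteristic-polynomial form.) Assume that every row of a is nonzero, i.e. for each i there exists j with a_{ij} ≠ 0. Then the characteristic polynomial of the (N+N²)×(N+N²) Jacobian J factors as charpoly(J) = charpoly(M) · (X + ε)^{N²−N}, where M is the 2N×2N reduced matrix. In particular, the spectrum of J consists of the eigenvalue −ε (with multiplicity at least N²−N) together with the eigenvalues of M. -/
open Polynomial Matrix in
lemma aux_det {m p : Type*} [Fintype m] [Fintype p] [DecidableEq m] [DecidableEq p]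
    (A : Matrix m m ℝ[X]) (Bm : Matrix m p ℝ[X]) (Cm : Matrix p m ℝ[X]) (d : ℝ[X]) :
    (fromBlocks A Bm Cm (d • 1)).det * d ^ Fintype.card m =
      (d • A - Bm * Cm).det * d ^ Fintype.card p := by
  have h : fromBlocks A Bm Cm (d • 1) * fromBlocks (d • (1 : Matrix m m ℝ[X])) 0 (-Cm) 1 =
      fromBlocks (d • A - Bm * Cm) Bm 0 (d • 1) := by
    rw [fromBlocks_multiply]
    simp [Matrix.mul_smul, Matrix.smul_mul, sub_eq_add_neg]
  have h2 := congrArg Matrix.det h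
  rw [det_mul, det_fromBlocks_zero₂₁, det_fromBlocks_zero₁₂] at h2
  simpa [Matrix.det_smul, mul_comm, mul_assoc, mul_left_comm] using h2

open Polynomial Matrix in
lemma aux_cm {n : Type*} [Fintype n] [DecidableEq n] (ε : ℝ) :
    charmatrix ((-ε) • (1 : Matrix n n ℝ)) =
      (X + Polynomial.C ε) • (1 : Matrix n n ℝ[X]) := by
  ext i j
  by_cases h : i = j
  · subst h
    simp [Matrix.smul_apply, Matrix.one_apply, sub_eq_add_neg]
  · simp [h, Matrix.smul_apply, Matrix.one_apply, charmatrix_apply_ne _ _ _ h]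


open Polynomial in
/-- Proposition 1 (characteristic polynomial form): the characteristic polynomial
of the full `(N+N²)×(N+N²)` Jacobian factors into the characteristic polynomial of the
reduced `2N×2N` matrix times `(X + ε)^(N²-N)`. -/
theorem jacobian_charpoly_factorization
    (N : ℕ) (hN : 1 ≤ N) (ε g₀ g₁ : ℝ)
    (a h₀ h₁ : Fin N → Fin N → ℝ)
    (ha : ∀ i : Fin N, ∃ j : Fin N, a i j ≠ 0)
    (Lh LDh : Matrix (Fin N) (Fin N) ℝ)
    (hLh : ∀ i j : Fin N, Lh i j =
      if i = j then -∑ m ∈ Finset.univ.erase i, a i m * h₀ i m else a i j * h₀ i j)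
    (hLDh : ∀ i j : Fin N, LDh i j =
      if i = j then -∑ m ∈ Finset.univ.erase i, a i m * h₁ i m else a i j * h₁ i j)
    (B : Matrix (Fin N) (Fin N × Fin N) ℝ)
    (hB : ∀ (i : Fin N) (kj : Fin N × Fin N), B i kj = if i = kj.1 then a i kj.2 else 0)
    (C : Matrix (Fin N × Fin N) (Fin N) ℝ)
    (hC : ∀ (ij : Fin N × Fin N) (k : Fin N),
      C ij k = h₁ ij.1 ij.2 * ((if ij.1 = k then 1 else 0) - (if ij.2 = k then 1 else 0)))
    (J : Matrix (Fin N ⊕ (Fin N × Fin N)) (Fin N ⊕ (Fin N × Fin N)) ℝ)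
    (hJ : J = Matrix.fromBlocks (g₁ • Lh) (g₀ • B) ((-ε) • C) ((-ε) • 1))
    (M : Matrix (Fin N ⊕ Fin N) (Fin N ⊕ Fin N) ℝ)
    (hM : M = Matrix.fromBlocks (g₁ • Lh) (g₀ • (1 : Matrix (Fin N) (Fin N) ℝ))
      (ε • LDh) ((-ε) • 1)) :
    J.charpoly = M.charpoly * (X + Polynomial.C ε) ^ (N ^ 2 - N) := by
  classical
  set d : ℝ[X] := X + Polynomial.C ε with hd
  have hd0 : d ≠ 0 := (monic_X_add_C ε).ne_zero
  -- Step 1 : B * C = -LDh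
  have hBC : B * C = -LDh := by
    ext i k
    simp only [Matrix.mul_apply, Matrix.neg_apply, hB, hC, hLDh]
    rw [Fintype.sum_prod_type]
    rw [Finset.sum_eq_single i]
    · by_cases h : i = k
      · subst h
        simp only [eq_self_iff_true, if_true, neg_neg]
        rw [← Finset.sum_erase_add Finset.univ _ (Finset.mem_univ i)]
        have h1 : ∀ j ∈ Finset.univ.erase i,
            a i j * (h₁ i j * ((1 : ℝ) - if j = i then 1 else 0)) = a i j * h₁ i j := by
          intro j hj
          rw [if_neg (Finset.mem_erase.mp hj).1]
          ring
        rw [Finset.sum_congr rfl h1]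
        simp
      · simp only [if_neg h]
        rw [Finset.sum_eq_single k]
        · simp [mul_comm]
        · intro j _ hj
          rw [if_neg hj]; ring
        · simp
    · intro b _ hb
      simp [if_neg (Ne.symm hb)]
    · simp
  -- Step 2 : block reductions
  set A₁ := Matrix.charmatrix (g₁ • Lh) with hA₁
  set K := (d • A₁ - ((g₀ * ε) • LDh).map Polynomial.C).det with hK
  have hrealJ : (g₀ • B) * ((-ε) • C) = (g₀ * ε) • LDh := by
    rw [Matrix.smul_mul, Matrix.mul_smul, hBC, smul_smul, mul_neg, neg_smul, smul_neg, neg_neg]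
  have hrealM : (g₀ • (1 : Matrix (Fin N) (Fin N) ℝ)) * (ε • LDh) = (g₀ * ε) • LDh := by
    rw [Matrix.smul_mul, Matrix.mul_smul, Matrix.one_mul, smul_smul]
  have hprodJ : (-(g₀ • B).map (Polynomial.C : ℝ →+* ℝ[X])) *
      (-((-ε) • C).map (Polynomial.C : ℝ →+* ℝ[X])) =
      ((g₀ * ε) • LDh).map (Polynomial.C : ℝ →+* ℝ[X]) := by
    rw [Matrix.neg_mul, Matrix.mul_neg, neg_neg, ← Matrix.map_mul, hrealJ]
  have hprodM : (-(g₀ • (1 : Matrix (Fin N) (Fin N) ℝ)).map (Polynomial.C : ℝ →+* ℝ[X])) *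
      (-(ε • LDh).map (Polynomial.C : ℝ →+* ℝ[X])) =
      ((g₀ * ε) • LDh).map (Polynomial.C : ℝ →+* ℝ[X]) := by
    rw [Matrix.neg_mul, Matrix.mul_neg, neg_neg, ← Matrix.map_mul, hrealM]
  have hJ' : J.charpoly * d ^ N = K * d ^ (N * N) := by
    have h1 := aux_det A₁ (-(g₀ • B).map (Polynomial.C : ℝ →+* ℝ[X]))
      (-((-ε) • C).map (Polynomial.C : ℝ →+* ℝ[X])) d
    simp only [Fintype.card_fin, Fintype.card_prod] at h1
    rw [hprodJ] at h1
    have e1 : J.charmatrix = Matrix.fromBlocks A₁ (-(g₀ • B).map (Polynomial.C : ℝ →+* ℝ[X]))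
        (-((-ε) • C).map (Polynomial.C : ℝ →+* ℝ[X])) (d • 1) := by
      rw [hJ, Matrix.charmatrix_fromBlocks, aux_cm]
    rw [Matrix.charpoly, e1]
    exact h1
  have hM' : M.charpoly * d ^ N = K * d ^ N := by
    have h1 := aux_det A₁ (-(g₀ • (1 : Matrix (Fin N) (Fin N) ℝ)).map (Polynomial.C : ℝ →+* ℝ[X]))
      (-(ε • LDh).map (Polynomial.C : ℝ →+* ℝ[X])) d
    simp only [Fintype.card_fin] at h1
    rw [hprodM] at h1
    have e1 : M.charmatrix = Matrix.fromBlocks A₁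
        (-(g₀ • (1 : Matrix (Fin N) (Fin N) ℝ)).map (Polynomial.C : ℝ →+* ℝ[X]))
        (-(ε • LDh).map (Polynomial.C : ℝ →+* ℝ[X])) (d • 1) := by
      rw [hM, Matrix.charmatrix_fromBlocks, aux_cm]
    rw [Matrix.charpoly, e1]
    exact h1
  have hMK : M.charpoly = K := mul_right_cancel₀ (pow_ne_zero N hd0) hM'
  have hle : N ≤ N ^ 2 := Nat.le_self_pow (by norm_num) N
  have key : J.charpoly * d ^ N = (M.charpoly * d ^ (N ^ 2 - N)) * d ^ N := by
    rw [hJ', hMK, mul_assoc, ← pow_add, Nat.sub_add_cancel hle, ← pow_two]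
  exact mul_right_cancel₀ (pow_ne_zero N hd0) key
end

section
/- Every vector of the form (0, χ) with χ in the kernel of B (i.e. Σ_j a_{ij}·χ_{ij} = 0 for every i) is an eigenvector of the Jacobian J with eigenvalue −ε: J·(0,χ)ᵀ = −ε·(0,χ)ᵀ. Consequently, since B has rank at most N, the eigenspace of J for the eigenvalue −ε has dimension at least N² − N. -/
/-- Vectors `(0, χ)` with `χ` in the kernel of `B` are eigenvectors of the Jacobian `J`
for the eigenvalue `-ε`; consequently the eigenspace of `J` for `-ε` has dimension at
least `N² - N`. -/
theorem jacobian_eigenvectors_neg_eps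
    (N : ℕ) (hN : 1 ≤ N) (ε g₀ g₁ : ℝ)
    (a h₀ h₁ : Fin N → Fin N → ℝ)
    (Lh : Matrix (Fin N) (Fin N) ℝ)
    (hLh : ∀ i j : Fin N, Lh i j =
      if i = j then -∑ m ∈ Finset.univ.erase i, a i m * h₀ i m else a i j * h₀ i j)
    (B : Matrix (Fin N) (Fin N × Fin N) ℝ)
    (hB : ∀ (i : Fin N) (kj : Fin N × Fin N), B i kj = if i = kj.1 then a i kj.2 else 0)
    (C : Matrix (Fin N × Fin N) (Fin N) ℝ)
    (hC : ∀ (ij : Fin N × Fin N) (k : Fin N),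
      C ij k = h₁ ij.1 ij.2 * ((if ij.1 = k then 1 else 0) - (if ij.2 = k then 1 else 0)))
    (J : Matrix (Fin N ⊕ (Fin N × Fin N)) (Fin N ⊕ (Fin N × Fin N)) ℝ)
    (hJ : J = Matrix.fromBlocks (g₁ • Lh) (g₀ • B) ((-ε) • C) ((-ε) • 1)) :
    (∀ χ : Fin N × Fin N → ℝ, (∀ i : Fin N, ∑ j : Fin N, a i j * χ (i, j) = 0) →
      J.mulVec (Sum.elim (0 : Fin N → ℝ) χ) = (-ε) • Sum.elim (0 : Fin N → ℝ) χ) ∧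
    N ^ 2 - N ≤ Module.finrank ℝ (Module.End.eigenspace (Matrix.toLin' J) (-ε)) := by
  -- B.mulVec χ i = ∑ j, a i j * χ (i, j)
  have hBmul : ∀ (χ : Fin N × Fin N → ℝ) (i : Fin N),
      B.mulVec χ i = ∑ j : Fin N, a i j * χ (i, j) := by
    intro χ i
    have : B.mulVec χ i = ∑ kj : Fin N × Fin N, (if i = kj.1 then a i kj.2 else 0) * χ kj := by
      simp [Matrix.mulVec, dotProduct, hB]
    rw [this, Fintype.sum_prod_type]
    simp [ite_mul, Finset.sum_ite_eq, eq_comm]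
  have key : ∀ χ : Fin N × Fin N → ℝ, (∀ i : Fin N, ∑ j : Fin N, a i j * χ (i, j) = 0) →
      J.mulVec (Sum.elim (0 : Fin N → ℝ) χ) = (-ε) • Sum.elim (0 : Fin N → ℝ) χ := by
    intro χ hχ
    subst hJ
    rw [Matrix.fromBlocks_mulVec]
    have hB0 : (g₀ • B).mulVec χ = 0 := by
      ext i
      simp [Matrix.smul_mulVec, hBmul χ i, hχ i]
    have h1 : ((-ε) • (1 : Matrix (Fin N × Fin N) (Fin N × Fin N) ℝ)).mulVec χ = (-ε) • χ := by
      rw [Matrix.smul_mulVec, Matrix.one_mulVec]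
    have e1 : Sum.elim (0 : Fin N → ℝ) χ ∘ Sum.inl = 0 := rfl
    have e2 : Sum.elim (0 : Fin N → ℝ) χ ∘ Sum.inr = χ := rfl
    rw [e1, e2, Matrix.mulVec_zero, Matrix.mulVec_zero, hB0, h1]
    ext (s | s) <;> simp
  refine ⟨key, ?_⟩
  -- linear map from ker B.mulVecLin into the eigenspace
  set K := LinearMap.ker B.mulVecLin with hK
  let E : (Fin N × Fin N → ℝ) →ₗ[ℝ] (Fin N ⊕ (Fin N × Fin N) → ℝ) :=
    { toFun := fun χ => Sum.elim 0 χ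
      map_add' := by intro x y; funext s; cases s <;> simp
      map_smul' := by intro c x; funext s; cases s <;> simp }
  have hmem : ∀ χ : K, Sum.elim (0 : Fin N → ℝ) (χ : Fin N × Fin N → ℝ) ∈
      Module.End.eigenspace (Matrix.toLin' J) (-ε) := by
    intro χ
    rw [Module.End.mem_eigenspace_iff, Matrix.toLin'_apply]
    apply key
    intro i
    have := χ.2
    rw [LinearMap.mem_ker] at this
    have := congrFun this i
    rw [Matrix.mulVecLin_apply] at this
    rw [← hBmul]
    exact this
  let F : K →ₗ[ℝ] (Module.End.eigenspace (Matrix.toLin' J) (-ε)) :=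
    LinearMap.codRestrict _ (E.comp K.subtype) hmem
  have hFinj : Function.Injective F := by
    intro x y hxy
    have : Sum.elim (0 : Fin N → ℝ) (x : Fin N × Fin N → ℝ) =
        Sum.elim (0 : Fin N → ℝ) (y : Fin N × Fin N → ℝ) := by
      have := congrArg (Subtype.val) hxy
      exact this
    ext kj
    exact congrFun this (Sum.inr kj)
  have hdim : Module.finrank ℝ K ≤
      Module.finrank ℝ (Module.End.eigenspace (Matrix.toLin' J) (-ε)) :=
    LinearMap.finrank_le_finrank_of_injective hFinj
  have hrk := LinearMap.finrank_range_add_finrank_ker B.mulVecLin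
  have hdom : Module.finrank ℝ (Fin N × Fin N → ℝ) = N ^ 2 := by
    simp [Module.finrank_pi, sq]
  have hrange : Module.finrank ℝ (LinearMap.range B.mulVecLin) ≤ N := by
    calc Module.finrank ℝ (LinearMap.range B.mulVecLin)
        ≤ Module.finrank ℝ (Fin N → ℝ) := Submodule.finrank_le _
      _ = N := Module.finrank_fin_fun ℝ
  have hker : Module.finrank ℝ (LinearMap.ker B.mulVecLin) = Module.finrank ℝ K := rfl
  omega
end

section
/- (Proposition 2, exact commuting case.) Suppose there is an invertible complex N×N matrix Q such that Q⁻¹·L^h·Q = diag(μ₁,…,μ_N) and Q⁻¹·L^{Dh}·Q = diag(ν₁,…,ν_N) are both diagonal. Then the characteristic polynomial of the 2N×2N reduced matrix M = [[g₁·L^h, g₀·I_N],[ε·L^{Dh}, −ε·I_N]] equals the product Π_{i=1}^N (X² + (ε − g₁·μ_i)·X − ε·(g₁·μ_i + g₀·ν_i)). In particular, the eigenvalues of M are exactly the roots of the N quadratic equations λ² + (ε − g₁·μ_i)λ − ε(g₁·μ_i + g₀·ν_i) = 0. -/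
open Polynomial Matrix

section Aux

variable {n : Type*} [DecidableEq n] [Fintype n] {R : Type*} [CommRing R]

lemma aux_charmatrix_blockDiagonal {o : Type*} [DecidableEq o] [Fintype o]
    (f : o → Matrix n n R) :
    charmatrix (blockDiagonal f) = blockDiagonal fun k => charmatrix (f k) := by
  ext ⟨i, k⟩ ⟨j, k'⟩
  simp only [charmatrix_apply, Matrix.sub_apply, blockDiagonal_apply, diagonal_apply,
    Matrix.map_apply, Prod.mk.injEq]
  by_cases hk : k = k'
  · subst hk
    by_cases hij : i = j <;> simp [hij]
  · simp [hk]

lemma aux_charpoly_blockDiagonal {o : Type*} [DecidableEq o] [Fintype o]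
    (f : o → Matrix n n R) :
    (blockDiagonal f).charpoly = ∏ k, (f k).charpoly := by
  rw [Matrix.charpoly, aux_charmatrix_blockDiagonal, det_blockDiagonal]
  rfl

lemma aux_charpoly_conj (P A : Matrix n n R) (hP : IsUnit P.det) :
    (P * A * P⁻¹).charpoly = A.charpoly := by
  have hPP : P * P⁻¹ = 1 := Matrix.mul_nonsing_inv P hP
  have hPP' : P⁻¹ * P = 1 := Matrix.nonsing_inv_mul P hP
  set φ := (Polynomial.C : R →+* R[X])
  have hmap : ∀ (B C : Matrix n n R), (B * C).map φ = B.map φ * C.map φ := fun B C =>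
    Matrix.map_mul
  have h1 : P.map φ * (P⁻¹).map φ = 1 := by
    rw [← hmap, hPP, Matrix.map_one φ (map_zero φ) (map_one φ)]
  have h1' : (P⁻¹).map φ * P.map φ = 1 := by
    rw [← hmap, hPP', Matrix.map_one φ (map_zero φ) (map_one φ)]
  have key : charmatrix (P * A * P⁻¹) = P.map φ * charmatrix A * (P⁻¹).map φ := by
    unfold charmatrix
    simp only [← RingHom.mapMatrix_apply] at hmap ⊢
    rw [hmap, hmap, Matrix.mul_sub, Matrix.sub_mul]
    congr 1
    have hc : (Matrix.scalar n (X : R[X])) * (RingHom.mapMatrix φ P⁻¹) =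
        (RingHom.mapMatrix φ P⁻¹) * Matrix.scalar n X :=
      (Matrix.scalar_commute (X : R[X]) (fun r' => Commute.all _ _) _)
    simp only [RingHom.mapMatrix_apply] at hc ⊢
    rw [Matrix.mul_assoc, hc, ← Matrix.mul_assoc, h1, Matrix.one_mul]
  rw [Matrix.charpoly, key, Matrix.det_mul, Matrix.det_mul, Matrix.charpoly]
  calc (P.map φ).det * (charmatrix A).det * ((P⁻¹).map φ).det
      = (charmatrix A).det * ((P.map φ).det * ((P⁻¹).map φ).det) := by ring
    _ = (charmatrix A).det := by rw [← Matrix.det_mul, h1, Matrix.det_one, mul_one]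

/-- The equivalence sending `Sum.inl i ↦ (0, i)` and `Sum.inr i ↦ (1, i)`. -/
def auxSumProdEquiv (N : ℕ) : (Fin N ⊕ Fin N) ≃ (Fin 2 × Fin N) where
  toFun x := Sum.elim (fun i => ((0 : Fin 2), i)) (fun i => ((1 : Fin 2), i)) x
  invFun p := if p.1 = 0 then Sum.inl p.2 else Sum.inr p.2
  left_inv := by rintro (i | i) <;> simp
  right_inv := by rintro ⟨a, i⟩; fin_cases a <;> simp

end Aux

open Polynomial in
/-- Proposition 2, exact commuting case: if `L^h` and `L^{Dh}` are simultaneously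
diagonalizable, the characteristic polynomial of the reduced `2N×2N` matrix `M` splits
into the `N` master stability quadratics. -/
theorem reduced_matrix_charpoly_commuting_case
    (N : ℕ) (hN : 1 ≤ N) (ε g₀ g₁ : ℂ)
    (Lh LDh Q : Matrix (Fin N) (Fin N) ℂ)
    (hQ : IsUnit Q.det)
    (μ ν : Fin N → ℂ)
    (hμ : Q⁻¹ * Lh * Q = Matrix.diagonal μ)
    (hν : Q⁻¹ * LDh * Q = Matrix.diagonal ν)
    (M : Matrix (Fin N ⊕ Fin N) (Fin N ⊕ Fin N) ℂ)
    (hM : M = Matrix.fromBlocks (g₁ • Lh) (g₀ • (1 : Matrix (Fin N) (Fin N) ℂ))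
      (ε • LDh) ((-ε) • 1)) :
    M.charpoly = ∏ i : Fin N,
      (X ^ 2 + Polynomial.C (ε - g₁ * μ i) * X
        - Polynomial.C (ε * (g₁ * μ i + g₀ * ν i))) := by
  have hQQ : Q * Q⁻¹ = 1 := Matrix.mul_nonsing_inv Q hQ
  have hQQ' : Q⁻¹ * Q = 1 := Matrix.nonsing_inv_mul Q hQ
  -- recover Lh and LDh from the diagonalizations
  have hLh : Lh = Q * Matrix.diagonal μ * Q⁻¹ := by
    rw [← hμ]
    simp only [Matrix.mul_assoc, hQQ, Matrix.mul_one]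
    rw [← Matrix.mul_assoc, hQQ, Matrix.one_mul]
  have hLDh : LDh = Q * Matrix.diagonal ν * Q⁻¹ := by
    rw [← hν]
    simp only [Matrix.mul_assoc, hQQ, Matrix.mul_one]
    rw [← Matrix.mul_assoc, hQQ, Matrix.one_mul]
  -- the block conjugating matrix
  set P : Matrix (Fin N ⊕ Fin N) (Fin N ⊕ Fin N) ℂ :=
    Matrix.fromBlocks Q 0 0 Q with hP
  have hPinv : P⁻¹ = Matrix.fromBlocks Q⁻¹ 0 0 Q⁻¹ := by
    apply Matrix.inv_eq_right_inv
    rw [hP, Matrix.fromBlocks_multiply]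
    simp [hQQ, Matrix.fromBlocks_one]
  -- the diagonalized block matrix
  set A : Matrix (Fin N ⊕ Fin N) (Fin N ⊕ Fin N) ℂ :=
    Matrix.fromBlocks (g₁ • Matrix.diagonal μ) (g₀ • (1 : Matrix (Fin N) (Fin N) ℂ))
      (ε • Matrix.diagonal ν) ((-ε) • 1) with hA
  have hMA : M = P * A * P⁻¹ := by
    rw [hM, hP, hPinv, hA, Matrix.fromBlocks_multiply, Matrix.fromBlocks_multiply]
    simp [hLh, hLDh, Matrix.mul_smul, Matrix.smul_mul, Matrix.mul_assoc, hQQ]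
  have hPunit : IsUnit P.det := by
    rw [hP, Matrix.det_fromBlocks_zero₂₁]
    exact hQ.mul hQ
  rw [hMA, aux_charpoly_conj P A hPunit]
  -- A is a reindexed block-diagonal matrix of 2×2 blocks
  set b : Fin N → Matrix (Fin 2) (Fin 2) ℂ :=
    fun i => !![g₁ * μ i, g₀; ε * ν i, -ε] with hb
  have hAB : A = (Matrix.blockDiagonal b).submatrix (auxSumProdEquiv N) (auxSumProdEquiv N) := by
    ext x y
    rcases x with i | i <;> rcases y with j | j <;>
      simp only [hA, Matrix.fromBlocks_apply₁₁, Matrix.fromBlocks_apply₁₂,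
        Matrix.fromBlocks_apply₂₁, Matrix.fromBlocks_apply₂₂, Matrix.submatrix_apply,
        auxSumProdEquiv, Equiv.coe_fn_mk, Sum.elim_inl, Sum.elim_inr,
        Matrix.blockDiagonal_apply, Matrix.smul_apply, Matrix.diagonal_apply,
        Matrix.one_apply, hb] <;>
      by_cases hij : i = j <;>
      simp [hij, Matrix.cons_val_zero, Matrix.cons_val_one, smul_eq_mul]
  have : A.charpoly = (Matrix.blockDiagonal b).charpoly := by
    rw [hAB]
    have := Matrix.charpoly_reindex (R := ℂ) (auxSumProdEquiv N).symm (Matrix.blockDiagonal b)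
    rwa [Matrix.reindex_apply, Equiv.symm_symm] at this
  rw [this, aux_charpoly_blockDiagonal]
  refine Finset.prod_congr rfl fun i _ => ?_
  -- charpoly of the 2×2 block
  rw [Matrix.charpoly, Matrix.det_fin_two]
  have h00 : charmatrix (b i) 0 0 = X - C (g₁ * μ i) := by
    rw [charmatrix_apply_eq]; simp [hb]
  have h11 : charmatrix (b i) 1 1 = X - C (-ε) := by
    rw [charmatrix_apply_eq]; simp [hb]
  have h01 : charmatrix (b i) 0 1 = -C g₀ := by
    rw [charmatrix_apply_ne _ _ _ (by decide)]; simp [hb]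
  have h10 : charmatrix (b i) 1 0 = -C (ε * ν i) := by
    rw [charmatrix_apply_ne _ _ _ (by decide)]; simp [hb]
  rw [h00, h11, h01, h10]
  simp only [Polynomial.C_neg, Polynomial.C_mul, Polynomial.C_sub, Polynomial.C_add]
  ring
end

section
/- (Proposition 2, general first-order form.) Suppose Q is an invertible complex N×N matrix with Q⁻¹·L^h·Q = diag(μ₁,…,μ_N) diagonal, and set T = Q⁻¹·L^{Dh}·Q with diagonal entries ν_i = T_{ii}. Then for every fixed λ ∈ ℂ, the polynomial in the variable ε given by det((λ+ε)·(λ·I_N − g₁·diag(μ)) − ε·g₀·T) − Π_{i=1}^N ((λ+ε)·(λ − g₁·μ_i) − ε·g₀·ν_i) is divisible by ε². In other words, the characteristic determinant of the reduced system agrees with the product of the N quadratics λ² + (ε − g₁·μ_i)λ − ε(g₁·μ_i + g₀·ν_i) up to terms of order ε². -/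
open Polynomial in
/-- Proposition 2, general first-order form: the characteristic determinant of the
reduced system agrees with the product of the `N` master stability quadratics up to
terms of order `ε²` (here `ε` is the polynomial variable `X`). -/
theorem reduced_det_first_order_in_eps
    (N : ℕ) (hN : 1 ≤ N) (g₀ g₁ : ℂ)
    (Lh LDh Q : Matrix (Fin N) (Fin N) ℂ)
    (hQ : IsUnit Q.det)
    (μ : Fin N → ℂ)
    (hμ : Q⁻¹ * Lh * Q = Matrix.diagonal μ)
    (T : Matrix (Fin N) (Fin N) ℂ)
    (hT : T = Q⁻¹ * LDh * Q)
    (ν : Fin N → ℂ)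
    (hν : ∀ i : Fin N, ν i = T i i)
    (lam : ℂ) :
    (X ^ 2 : Polynomial ℂ) ∣
      ((((X + Polynomial.C lam) •
            (Polynomial.C lam • (1 : Matrix (Fin N) (Fin N) (Polynomial ℂ))
              - Polynomial.C g₁ • (Matrix.diagonal μ).map Polynomial.C)
          - (X * Polynomial.C g₀) • T.map Polynomial.C).det)
        - ∏ i : Fin N,
            ((X + Polynomial.C lam) * Polynomial.C (lam - g₁ * μ i)
              - X * Polynomial.C (g₀ * ν i))) := by
  classical
  set M : Matrix (Fin N) (Fin N) (Polynomial ℂ) :=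
    ((X + Polynomial.C lam) •
        (Polynomial.C lam • (1 : Matrix (Fin N) (Fin N) (Polynomial ℂ))
          - Polynomial.C g₁ • (Matrix.diagonal μ).map Polynomial.C)
      - (X * Polynomial.C g₀) • T.map Polynomial.C) with hM
  have hoff : ∀ a b : Fin N, a ≠ b → (X : Polynomial ℂ) ∣ M a b := by
    intro a b hab
    have : M a b = X * (-(Polynomial.C g₀ * Polynomial.C (T a b))) := by
      simp [hM, Matrix.sub_apply, Matrix.smul_apply, Matrix.one_apply_ne hab,
        Matrix.diagonal_apply_ne _ hab]
      ring
    exact ⟨_, this⟩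
  have key : ∀ σ : Equiv.Perm (Fin N), σ ≠ 1 →
      (X ^ 2 : Polynomial ℂ) ∣ ∏ i, M (σ i) i := by
    intro σ hσ
    have hcard : 2 ≤ σ.support.card := Equiv.Perm.one_lt_card_support_of_ne_one hσ
    have h1 : (X ^ σ.support.card : Polynomial ℂ) ∣ ∏ i ∈ σ.support, M (σ i) i := by
      rw [← Finset.prod_const]
      exact Finset.prod_dvd_prod_of_dvd _ _ fun i hi =>
        hoff (σ i) i (Equiv.Perm.mem_support.mp hi)
    have h2 : (X ^ 2 : Polynomial ℂ) ∣ ∏ i ∈ σ.support, M (σ i) i :=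
      dvd_trans (pow_dvd_pow _ hcard) h1
    calc (X ^ 2 : Polynomial ℂ) ∣ ∏ i ∈ σ.support, M (σ i) i := h2
      _ ∣ ∏ i, M (σ i) i := Finset.prod_dvd_prod_of_subset _ _ _ (Finset.subset_univ _)
  have hdiag : (∏ i : Fin N,
      ((X + Polynomial.C lam) * Polynomial.C (lam - g₁ * μ i)
        - X * Polynomial.C (g₀ * ν i))) = ∏ i, M i i := by
    apply Finset.prod_congr rfl
    intro i _
    simp [hM, Matrix.sub_apply, Matrix.smul_apply, Matrix.one_apply_eq,
      Matrix.diagonal_apply_eq, hν i, map_sub, map_mul]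
    ring
  rw [Matrix.det_apply, hdiag]
  have hsplit : (∑ σ : Equiv.Perm (Fin N),
        Equiv.Perm.sign σ • ∏ i, M (σ i) i)
      = (∑ σ ∈ Finset.univ.erase (1 : Equiv.Perm (Fin N)),
          Equiv.Perm.sign σ • ∏ i, M (σ i) i) + ∏ i, M i i := by
    rw [← Finset.sum_erase_add _ _ (Finset.mem_univ (1 : Equiv.Perm (Fin N)))]
    simp
  rw [hsplit, add_sub_cancel_right]
  refine Finset.dvd_sum fun σ hσ => ?_
  have hne : σ ≠ 1 := Finset.ne_of_mem_erase hσ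
  obtain ⟨c, hc⟩ := key σ hne
  rw [hc]
  rcases Int.units_eq_one_or (Equiv.Perm.sign σ) with h | h <;>
    simp [h, Units.smul_def] <;> exact ⟨c, by ring⟩
end

section
/- (Eigenvalue formula (24), case k ≠ 1.) For every real p and every natural number k with k ≠ 1, −2·∫₀^p sin(2πx)·(cos(2πkx) − 1) dx = (1 − cos(2πp))/π + (1/(π·(1 − k²)))·(k·sin(2πp)·sin(2πkp) + cos(2πp)·cos(2πkp) − 1). -/
open Real

/-- Eigenvalue formula (24) for `k ≠ 1`. -/
theorem mu_k_formula (p : ℝ) (k : ℕ) (hk : k ≠ 1) :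
    -2 * ∫ x in (0 : ℝ)..p,
        Real.sin (2 * Real.pi * x) * (Real.cos (2 * Real.pi * (k : ℝ) * x) - 1) =
      (1 - Real.cos (2 * Real.pi * p)) / Real.pi +
        (1 / (Real.pi * (1 - (k : ℝ) ^ 2))) *
          ((k : ℝ) * Real.sin (2 * Real.pi * p) * Real.sin (2 * Real.pi * (k : ℝ) * p) +
            Real.cos (2 * Real.pi * p) * Real.cos (2 * Real.pi * (k : ℝ) * p) - 1) := by
  have hpi : Real.pi ≠ 0 := Real.pi_ne_zero
  have hk1 : (k : ℝ) ≠ 1 := by exact_mod_cast hk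
  have hkneg : (k : ℝ) + 1 ≠ 0 := by positivity
  have hk2 : (1 : ℝ) - (k : ℝ) ^ 2 ≠ 0 := by
    intro h
    have : ((1 : ℝ) - k) * (1 + k) = 0 := by ring_nf; linarith [h]
    rcases mul_eq_zero.mp this with h1 | h1
    · exact hk1 (by linarith)
    · exact hkneg (by linarith)
  set F : ℝ → ℝ := fun x =>
    (1 - Real.cos (2 * Real.pi * x)) / Real.pi +
      (1 / (Real.pi * (1 - (k : ℝ) ^ 2))) *
        ((k : ℝ) * Real.sin (2 * Real.pi * x) * Real.sin (2 * Real.pi * (k : ℝ) * x) +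
          Real.cos (2 * Real.pi * x) * Real.cos (2 * Real.pi * (k : ℝ) * x) - 1) with hF
  have hd : ∀ x : ℝ, HasDerivAt F
      (-2 * (Real.sin (2 * Real.pi * x) * (Real.cos (2 * Real.pi * (k : ℝ) * x) - 1))) x := by
    intro x
    have h1 : HasDerivAt (fun x : ℝ => 2 * Real.pi * x) (2 * Real.pi) x := by
      simpa using (hasDerivAt_id x).const_mul (2 * Real.pi)
    have h2 : HasDerivAt (fun x : ℝ => 2 * Real.pi * (k : ℝ) * x) (2 * Real.pi * (k : ℝ)) x := by
      simpa using (hasDerivAt_id x).const_mul (2 * Real.pi * (k : ℝ))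
    have hsin1 : HasDerivAt (fun x : ℝ => Real.sin (2 * Real.pi * x))
        (Real.cos (2 * Real.pi * x) * (2 * Real.pi)) x := (Real.hasDerivAt_sin _).comp x h1
    have hcos1 : HasDerivAt (fun x : ℝ => Real.cos (2 * Real.pi * x))
        (-Real.sin (2 * Real.pi * x) * (2 * Real.pi)) x := (Real.hasDerivAt_cos _).comp x h1
    have hsin2 : HasDerivAt (fun x : ℝ => Real.sin (2 * Real.pi * (k : ℝ) * x))
        (Real.cos (2 * Real.pi * (k : ℝ) * x) * (2 * Real.pi * (k : ℝ))) x :=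
      (Real.hasDerivAt_sin _).comp x h2
    have hcos2 : HasDerivAt (fun x : ℝ => Real.cos (2 * Real.pi * (k : ℝ) * x))
        (-Real.sin (2 * Real.pi * (k : ℝ) * x) * (2 * Real.pi * (k : ℝ))) x :=
      (Real.hasDerivAt_cos _).comp x h2
    have hD : HasDerivAt F
        ((0 - -Real.sin (2 * Real.pi * x) * (2 * Real.pi)) / Real.pi +
          (1 / (Real.pi * (1 - (k : ℝ) ^ 2))) *
            (((k : ℝ) * (Real.cos (2 * Real.pi * x) * (2 * Real.pi)) *
                Real.sin (2 * Real.pi * (k : ℝ) * x) +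
              (k : ℝ) * Real.sin (2 * Real.pi * x) *
                (Real.cos (2 * Real.pi * (k : ℝ) * x) * (2 * Real.pi * (k : ℝ)))) +
              (-Real.sin (2 * Real.pi * x) * (2 * Real.pi) * Real.cos (2 * Real.pi * (k : ℝ) * x) +
                Real.cos (2 * Real.pi * x) *
                  (-Real.sin (2 * Real.pi * (k : ℝ) * x) * (2 * Real.pi * (k : ℝ)))) - 0)) x := by
      exact (((hasDerivAt_const x (1:ℝ)).sub hcos1).div_const Real.pi).add
        (((((hsin1.const_mul ((k : ℝ))).mul hsin2).add (hcos1.mul hcos2)).sub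
          (hasDerivAt_const x (1:ℝ))).const_mul _)
    convert hD using 1
    field_simp
    ring
  have hint : ∫ x in (0:ℝ)..p,
      (-2 * (Real.sin (2 * Real.pi * x) * (Real.cos (2 * Real.pi * (k : ℝ) * x) - 1))) =
      F p - F 0 := by
    apply intervalIntegral.integral_eq_sub_of_hasDerivAt (fun x _ => hd x)
    apply Continuous.intervalIntegrable
    continuity
  have hF0 : F 0 = 0 := by simp [hF]
  rw [← intervalIntegral.integral_const_mul] at *
  rw [hint, hF0, sub_zero, hF]
end

section
/- (Positivity of the eigenvalues μ_k.) For every relative coupling range p with 0 < p ≤ 1/2 and every integer k ≥ 1, the eigenvalue μ_k = −2·∫₀^p sin(2πx)·(cos(2πkx) − 1) dx is strictly positive. Combined with the stability condition c₁ = μ·cos α > −ε, this shows that as ε → 0 the synchronous state can be stable only if cos α > 0, i.e. only for α ∈ (−π/2, π/2). -/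
/-- Positivity of the eigenvalues `μ_k` for a nonlocally coupled ring with relative
coupling range `0 < p ≤ 1/2`. -/
theorem mu_k_positive (p : ℝ) (hp : 0 < p) (hp' : p ≤ 1 / 2) (k : ℕ) (hk : 1 ≤ k) :
    0 < -2 * ∫ x in (0 : ℝ)..p,
        Real.sin (2 * Real.pi * x) * (Real.cos (2 * Real.pi * (k : ℝ) * x) - 1) := by
  have hkpos : (0 : ℝ) < k := by exact_mod_cast hk
  have hπ := Real.pi_pos
  set f : ℝ → ℝ := fun x => Real.sin (2 * Real.pi * x) * (Real.cos (2 * Real.pi * (k : ℝ) * x) - 1)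
    with hf
  have hcont : Continuous f := by
    apply Continuous.mul
    · exact (Real.continuous_sin.comp (by continuity))
    · exact ((Real.continuous_cos.comp (by continuity)).sub continuous_const)
  set q : ℝ := min p (1 / (2 * k)) with hq
  have hq0 : 0 < q := lt_min hp (by positivity)
  have hqp : q ≤ p := min_le_left _ _
  have hqk : q ≤ 1 / (2 * k) := min_le_right _ _
  -- integrand is nonpositive on [0, p]
  have hnonpos : ∀ x ∈ Set.Icc (0 : ℝ) p, f x ≤ 0 := by
    intro x hx
    have h1 : 0 ≤ Real.sin (2 * Real.pi * x) := by
      apply Real.sin_nonneg_of_nonneg_of_le_pi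
      · nlinarith [hx.1]
      · nlinarith [hx.2, hp']
    have h2 : Real.cos (2 * Real.pi * (k : ℝ) * x) - 1 ≤ 0 := by
      have := Real.cos_le_one (2 * Real.pi * (k : ℝ) * x)
      linarith
    exact mul_nonpos_of_nonneg_of_nonpos h1 h2
  -- strict negativity on (0, q)
  have hneg : ∀ x ∈ Set.Ioo (0 : ℝ) q, 0 < -f x := by
    intro x hx
    have hx0 := hx.1
    have hxq := hx.2
    have hx12 : x < 1 / 2 := lt_of_lt_of_le hxq (hqk.trans (by
      have : (1:ℝ) ≤ k := by exact_mod_cast hk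
      rw [div_le_div_iff₀ (by positivity) (by norm_num)]
      linarith))
    have h1 : 0 < Real.sin (2 * Real.pi * x) := by
      apply Real.sin_pos_of_pos_of_lt_pi
      · positivity
      · nlinarith
    have hxk : (2 * Real.pi * (k : ℝ)) * x ≤ Real.pi := by
      have : x ≤ 1 / (2 * k) := le_of_lt (lt_of_lt_of_le hxq hqk)
      rw [le_div_iff₀ (by positivity)] at this
      nlinarith
    have h2 : Real.cos (2 * Real.pi * (k : ℝ) * x) < 1 := by
      have := Real.cos_lt_cos_of_nonneg_of_le_pi (le_refl (0:ℝ)) hxk (by positivity)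
      simpa using this
    have : 0 < Real.sin (2 * Real.pi * x) * (1 - Real.cos (2 * Real.pi * (k : ℝ) * x)) := by
      apply mul_pos h1; linarith
    simp only [hf]; nlinarith
  have hint : ∀ a b : ℝ, IntervalIntegrable f MeasureTheory.volume a b :=
    fun a b => hcont.intervalIntegrable a b
  have hsplit : ∫ x in (0:ℝ)..p, f x = (∫ x in (0:ℝ)..q, f x) + ∫ x in q..p, f x :=
    (intervalIntegral.integral_add_adjacent_intervals (hint 0 q) (hint q p)).symm
  have h1 : 0 < ∫ x in (0:ℝ)..q, -f x :=
    intervalIntegral.intervalIntegral_pos_of_pos_on ((hint 0 q).neg) hneg hq0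
  have h1' : ∫ x in (0:ℝ)..q, f x < 0 := by
    rw [intervalIntegral.integral_neg] at h1; linarith
  have h2 : 0 ≤ ∫ x in q..p, -f x := by
    apply intervalIntegral.integral_nonneg hqp
    intro u hu
    have : f u ≤ 0 := hnonpos u ⟨le_trans hq0.le hu.1, hu.2⟩
    linarith
  have h2' : ∫ x in q..p, f x ≤ 0 := by
    rw [intervalIntegral.integral_neg] at h2; linarith
  have : ∫ x in (0:ℝ)..p, f x < 0 := by rw [hsplit]; linarith
  linarith
end

section
/- (Limit μ_∞ of the eigenvalues μ_k.) For every fixed real p, the sequence μ_k = −2·∫₀^p sin(2πx)·(cos(2πkx) − 1) dx converges as k → ∞ (k ∈ ℕ) to μ_∞ = (1 − cos(2πp))/π. -/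
/-!
Writing `sin (a x) (cos (b x) - 1) = (sin ((a + b) x) + sin ((a - b) x)) / 2 - sin (a x)`, the
integral becomes a combination of integrals `∫₀ᵖ sin (c x) dx = (1 - cos (c p)) / c`, which are
`O(1 / |c|)`. The two terms with `c = a ± b` therefore vanish as `|b| → ∞`, leaving
`-2 ∫₀ᵖ sin (a x) dx`; here `a = 2π` and `b = 2πk`.
-/

open Real Filter Topology

namespace Real

theorem integral_sin_mul (a p : ℝ) :
    ∫ x in (0 : ℝ)..p, sin (a * x) = (1 - cos (a * p)) / a := by
  rcases eq_or_ne a 0 with rfl | ha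
  · simp
  · rw [intervalIntegral.integral_comp_mul_left sin ha, integral_sin]
    simp [div_eq_inv_mul]

theorem abs_integral_sin_mul_le (a p : ℝ) :
    |∫ x in (0 : ℝ)..p, sin (a * x)| ≤ 2 / |a| := by
  rw [integral_sin_mul, abs_div]
  gcongr
  rw [abs_le]
  constructor <;> linarith [neg_one_le_cos (a * p), cos_le_one (a * p)]

theorem tendsto_integral_sin_mul_zero {ι : Type*} {l : Filter ι} {a : ι → ℝ}
    (ha : Tendsto (fun i => |a i|) l atTop) (p : ℝ) :
    Tendsto (fun i => ∫ x in (0 : ℝ)..p, sin (a i * x)) l (𝓝 0) :=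
  squeeze_zero_norm (fun i => abs_integral_sin_mul_le (a i) p) (ha.const_div_atTop 2)

theorem integral_sin_mul_mul_cos_mul_sub_one (a b p : ℝ) :
    ∫ x in (0 : ℝ)..p, sin (a * x) * (cos (b * x) - 1) =
      ((∫ x in (0 : ℝ)..p, sin ((a + b) * x)) + ∫ x in (0 : ℝ)..p, sin ((a - b) * x)) / 2 -
        ∫ x in (0 : ℝ)..p, sin (a * x) := by
  have hprod (x : ℝ) : sin (a * x) * (cos (b * x) - 1) =
      (sin ((a + b) * x) + sin ((a - b) * x)) / 2 - sin (a * x) := by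
    rw [add_mul, sub_mul, sin_add, sin_sub]
    ring
  have hint {f : ℝ → ℝ} (hf : Continuous f) : IntervalIntegrable f MeasureTheory.volume 0 p :=
    hf.intervalIntegrable 0 p
  simp only [hprod]
  rw [intervalIntegral.integral_sub (hint (by fun_prop)) (hint (by fun_prop)),
    intervalIntegral.integral_div,
    intervalIntegral.integral_add (hint (by fun_prop)) (hint (by fun_prop))]

end Real

theorem Filter.Tendsto.abs_const_add_atTop {ι : Type*} {l : Filter ι} {b : ι → ℝ}
    (hb : Tendsto (fun i => |b i|) l atTop) (a : ℝ) :
    Tendsto (fun i => |a + b i|) l atTop :=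
  tendsto_atTop_mono (fun i => by linarith [add_comm (b i) a ▸ abs_sub_abs_le_abs_add (b i) a])
    (tendsto_atTop_add_const_left _ (-|a|) hb)

theorem tendsto_integral_sin_mul_mul_cos_mul_sub_one {ι : Type*} {l : Filter ι} {b : ι → ℝ}
    (hb : Tendsto (fun i => |b i|) l atTop) (a p : ℝ) :
    Tendsto (fun i => ∫ x in (0 : ℝ)..p, sin (a * x) * (cos (b i * x) - 1)) l
      (𝓝 (-∫ x in (0 : ℝ)..p, sin (a * x))) := by
  have hsub : Tendsto (fun i => |a - b i|) l atTop := by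
    simpa [sub_eq_add_neg] using (hb.congr fun i => (abs_neg (b i)).symm).abs_const_add_atTop a
  simp only [integral_sin_mul_mul_cos_mul_sub_one]
  simpa using ((tendsto_integral_sin_mul_zero (hb.abs_const_add_atTop a) p).add
    (tendsto_integral_sin_mul_zero hsub p)).div_const 2 |>.sub_const
      (∫ x in (0 : ℝ)..p, sin (a * x))

/-- Limit `μ_∞` of the eigenvalues `μ_k` as `k → ∞`. -/
theorem mu_k_limit (p : ℝ) :
    Filter.Tendsto
      (fun k : ℕ => -2 * ∫ x in (0 : ℝ)..p,
        Real.sin (2 * Real.pi * x) * (Real.cos (2 * Real.pi * (k : ℝ) * x) - 1))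
      Filter.atTop
      (nhds ((1 - Real.cos (2 * Real.pi * p)) / Real.pi)) := by
  have hk : Tendsto (fun k : ℕ => |2 * π * k|) atTop atTop :=
    tendsto_abs_atTop_atTop.comp (tendsto_natCast_atTop_atTop.const_mul_atTop two_pi_pos)
  have hlimit : -2 * -∫ x in (0 : ℝ)..p, sin (2 * π * x) = (1 - cos (2 * π * p)) / π := by
    rw [integral_sin_mul]
    field_simp
  simpa only [hlimit] using
    (tendsto_integral_sin_mul_mul_cos_mul_sub_one hk (2 * π) p).const_mul (-2)
end

section
/- (Sign change of ν₁.) Define f : ℝ → ℝ by f(p) = sin(2πp)/π − p − sin(4πp)/(4π), which is the eigenvalue ν₁(p) = −2·∫₀^p cos(2πx)·(cos(2πx) − 1) dx of L^{Dh} as a function of the relative coupling range p. Then f(1/4) = 1/π − 1/4 > 0 and f(1/2) = −1/2 < 0; in particular, f changes sign on the interval (1/4, 1/2), i.e. there exists p ∈ (1/4, 1/2) with f(p) = 0. This sign change of the single eigenvalue ν₁ is responsible for the destabilization of the synchronous state by long-range connections when sin α > 0. -/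
/-- Sign change of `ν₁`: the eigenvalue `ν₁(p) = sin(2πp)/π − p − sin(4πp)/(4π)` is
positive at `p = 1/4` (where it equals `1/π − 1/4`), negative at `p = 1/2` (where it
equals `−1/2`), and hence vanishes somewhere in `(1/4, 1/2)`. -/
theorem nu_one_sign_change
    (f : ℝ → ℝ)
    (hf : ∀ p : ℝ, f p =
      Real.sin (2 * Real.pi * p) / Real.pi - p - Real.sin (4 * Real.pi * p) / (4 * Real.pi)) :
    f (1 / 4) = 1 / Real.pi - 1 / 4 ∧ 0 < 1 / Real.pi - 1 / 4 ∧
    f (1 / 2) = -(1 / 2) ∧ (-(1 / 2) : ℝ) < 0 ∧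
    ∃ p ∈ Set.Ioo (1 / 4 : ℝ) (1 / 2 : ℝ), f p = 0 := by
  have hpi := Real.pi_pos
  have h14 : f (1 / 4) = 1 / Real.pi - 1 / 4 := by
    rw [hf]
    have h1 : 2 * Real.pi * (1 / 4) = Real.pi / 2 := by ring
    have h2 : 4 * Real.pi * (1 / 4) = Real.pi := by ring
    rw [h1, h2, Real.sin_pi_div_two, Real.sin_pi]
    ring
  have hpos : 0 < 1 / Real.pi - 1 / 4 := by
    have : Real.pi < 4 := by linarith [Real.pi_lt_d2]
    have : 1 / 4 < 1 / Real.pi := by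
      apply one_div_lt_one_div_of_lt hpi this
    linarith
  have h12 : f (1 / 2) = -(1 / 2) := by
    rw [hf]
    have h1 : 2 * Real.pi * (1 / 2) = Real.pi := by ring
    have h2 : 4 * Real.pi * (1 / 2) = 2 * Real.pi := by ring
    rw [h1, h2, Real.sin_pi, Real.sin_two_pi]
    ring
  refine ⟨h14, hpos, h12, by norm_num, ?_⟩
  have hfe : f = fun p => Real.sin (2 * Real.pi * p) / Real.pi - p -
      Real.sin (4 * Real.pi * p) / (4 * Real.pi) := funext hf
  have hcont : ContinuousOn f (Set.Icc (1/4 : ℝ) (1/2)) := by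
    rw [hfe]; fun_prop
  have := intermediate_value_Ioo' (by norm_num : (1/4 : ℝ) ≤ 1/2) hcont
  have hmem : (0 : ℝ) ∈ Set.Ioo (f (1/2)) (f (1/4)) := by
    rw [h14, h12]; constructor <;> [norm_num; linarith]
  obtain ⟨p, hp, hfp⟩ := this hmem
  exact ⟨p, hp, hfp⟩
end
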